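/- In the majority-coordination meta-game, if p > 1/2, then every Nash equilibrium Γ of the one-shot meta-game satisfies Ū^1(Γ) > Ū^2(Γ). -/

import Mathlib

open Finset

namespace MetaGame

/-- A mixed action over a finite action set: a probability vector. -/
def Mixed (α : Type) [Fintype α] : Type :=
  {f : α → ℝ // (∀ a, 0 ≤ f a) ∧ ∑ a, f a = 1}

/-- The point-mass (Dirac) mixed action on `a`. -/
noncomputable def Mixed.dirac {α : Type} [Fintype α] [DecidableEq α] (a : α) : Mixed α :=
  ⟨fun b => if b = a then 1 else 0,
    fun b => by by_cases h : b = a <;> simp [h],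
    by simp⟩

/-- A finitely supported probability distribution on `α`. -/
structure FinDist (α : Type) where
  support : Finset α
  w : α → ℝ
  nonneg : ∀ x, 0 ≤ w x
  sum_one : ∑ x ∈ support, w x = 1
  zero_of_not_mem : ∀ x, x ∉ support → w x = 0

/-- The point mass distribution on `x`. -/
noncomputable def FinDist.pure {α : Type} (x : α) : FinDist α := by
  classical
  exact
    { support := {x}
      w := fun y => if y = x then 1 else 0
      nonneg := fun y => by by_cases h : y = x <;> simp [h]
      sum_one := by simp
      zero_of_not_mem := fun y hy => by
        simp only [Finset.mem_singleton] at hy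
        simp [hy] }

variable {m k : ℕ} {A : Fin m → Type} [∀ i, Fintype (A i)] [∀ i, DecidableEq (A i)]

/-- Multilinear extension of a payoff function to profiles of mixed actions. -/
noncomputable def expPay (u : (∀ r : Fin m, A r) → ℝ) (σ : ∀ r, Mixed (A r)) : ℝ :=
  ∑ a : ∀ r : Fin m, A r, (∏ r, (σ r).1 (a r)) * u a

/-- A pure meta-action: a mixed action for each role. -/
abbrev PureMeta (A : Fin m → Type) [∀ i, Fintype (A i)] : Type := ∀ i, Mixed (A i)

/-- The role-homogeneous pure meta-action instructing pure action `a i` in each role `i`. -/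
noncomputable def diracProfile (a : ∀ i : Fin m, A i) : PureMeta A := fun i => Mixed.dirac (a i)

/-- Utility of LLM `j` under a profile of pure meta-actions. -/
noncomputable def Upure (u : ∀ i : Fin m, (∀ r : Fin m, A r) → ℝ) (p : Fin m → Fin k → ℝ)
    (j : Fin k) (M : Fin k → PureMeta A) : ℝ :=
  ∑ i, ∑ g : Fin m → Fin k,
    if g i = j then (∏ r, p r (g r)) * expPay (u i) (fun r => M (g r) r) else 0

/-- Utility of LLM `j` under a profile of (finitely supported, independent) meta-actions. -/
noncomputable def U (u : ∀ i : Fin m, (∀ r : Fin m, A r) → ℝ) (p : Fin m → Fin k → ℝ)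
    (Γ : Fin k → FinDist (PureMeta A)) (j : Fin k) : ℝ :=
  ∑ M ∈ Fintype.piFinset (fun j' => (Γ j').support),
    (∏ j', (Γ j').w (M j')) * Upure u p j M

/-- Nash equilibrium of the one-shot meta-game. -/
def Nash (u : ∀ i : Fin m, (∀ r : Fin m, A r) → ℝ) (p : Fin m → Fin k → ℝ)
    (Γ : Fin k → FinDist (PureMeta A)) : Prop :=
  ∀ (j : Fin k) (Γ' : FinDist (PureMeta A)),
    U u p (Function.update Γ j Γ') j ≤ U u p Γ j

/-- Average utility of the clients governed by LLM `j`. -/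
noncomputable def avgU (u : ∀ i : Fin m, (∀ r : Fin m, A r) → ℝ) (p : Fin m → Fin k → ℝ)
    (Γ : Fin k → FinDist (PureMeta A)) (j : Fin k) : ℝ :=
  U u p Γ j / ∑ i, p i j

/-- A meta-action is role-homogeneous if every pure meta-action in its support is a
tuple of point-mass mixed actions. -/
def RoleHomogeneous (Γ : FinDist (PureMeta A)) : Prop :=
  ∀ M ∈ Γ.support, ∃ a : ∀ i : Fin m, A i, M = diracProfile a


/-- Majority-coordination payoffs with three roles and actions `{0,1}` (encoded as `Bool`): if
all three roles choose the same action each receives `100/3`; if exactly two coincide those two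
receive `50` each and the third receives `0`. -/
noncomputable def mcu (i : Fin 3) (a : ∀ _ : Fin 3, Bool) : ℝ :=
  if a 0 = a 1 ∧ a 1 = a 2 then 100 / 3
  else if (Finset.univ.filter (fun r => a r = a i)).card = 2 then 50 else 0

/-- Client shares in the two-LLM majority-coordination meta-game: LLM `0` governs a share `pp`
of each role, LLM `1` the remaining `1 - pp`. -/
def mcp (pp : ℝ) : Fin 3 → Fin 2 → ℝ := fun _ j => if j = 0 then pp else 1 - pp

end MetaGame

/-!
The majority-coordination game is constant-sum: under every action profile the payoffs of the
three roles add up to `100`, hence so do the utilities of the two LLMs. Against any meta-action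
of the small LLM, the large LLM can deviate to "all roles play `b`"; averaged over `b ∈ {0, 1}`
this deviation earns it at least `100 p + 50 p (1 - p) (2 p - 1) > 100 p`. At a Nash equilibrium
the large LLM therefore gets more than `100 p`, i.e. more than `100 / 3` per client, and the small
LLM less than `100 (1 - p)`, i.e. less than `100 / 3` per client.
-/

namespace MetaGame

open Finset

theorem Mixed.le_one {α : Type} [Fintype α] (σ : Mixed α) (a : α) : σ.1 a ≤ 1 :=
  (single_le_sum (fun b _ => σ.2.1 b) (mem_univ a)).trans_eq σ.2.2

theorem Mixed.apply_false (σ : Mixed Bool) : σ.1 false = 1 - σ.1 true := by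
  have h := σ.2.2
  rw [Fintype.sum_bool] at h
  linarith

theorem sum_piFinset_prod_eq_one {ι : Type} [Fintype ι] [DecidableEq ι] {κ : ι → Type}
    (t : ∀ i, Finset (κ i)) (f : ∀ i, κ i → ℝ) (h : ∀ i, ∑ x ∈ t i, f i x = 1) :
    ∑ x ∈ Fintype.piFinset t, ∏ i, f i (x i) = 1 := by
  simp [← prod_univ_sum, h]

theorem sum_piFinset_fin_two {α : Type} (t : Fin 2 → Finset α) (F : (Fin 2 → α) → ℝ) :
    ∑ x ∈ Fintype.piFinset t, F x = ∑ x ∈ t 0, ∑ y ∈ t 1, F ![x, y] := by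
  rw [← sum_product']
  refine sum_nbij' (fun x => (x 0, x 1)) (fun q => ![q.1, q.2]) ?_ ?_ ?_ ?_ ?_
  · simp [Fintype.mem_piFinset]
  · simp [Fintype.mem_piFinset, Fin.forall_fin_two]
  · intro x _; ext i; fin_cases i <;> rfl
  · simp
  · intro x _; congr; ext i; fin_cases i <;> rfl

theorem sum_fun_fin_three {α : Type} [Fintype α] (F : (Fin 3 → α) → ℝ) :
    ∑ a, F a = ∑ x, ∑ y, ∑ z, F ![x, y, z] := by
  rw [← Fintype.sum_prod_type', ← Fintype.sum_prod_type']
  refine Fintype.sum_equiv ⟨fun a => ((a 0, a 1), a 2), fun q => ![q.1.1, q.1.2, q.2],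
    fun a => ?_, fun _ => rfl⟩ _ _ fun a => congrArg F ?_ <;> ext i <;> fin_cases i <;> rfl

section ConstantSum

variable {m k : ℕ} {A : Fin m → Type} [∀ i, Fintype (A i)]
  {u : Fin m → (∀ r, A r) → ℝ} {p : Fin m → Fin k → ℝ} {c : ℝ}

theorem sum_expPay_eq (hu : ∀ a, ∑ i, u i a = c) (σ : ∀ r, Mixed (A r)) :
    ∑ i, expPay (u i) σ = c := by
  simp only [expPay]
  rw [sum_comm]
  simp only [← mul_sum, hu]
  rw [← sum_mul, ← Fintype.piFinset_univ, sum_piFinset_prod_eq_one _ _ fun r => (σ r).2.2,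
    one_mul]

theorem sum_Upure_eq (hp : ∀ i, ∑ j, p i j = 1) (hu : ∀ a, ∑ i, u i a = c)
    (M : Fin k → PureMeta A) : ∑ j, Upure u p j M = c := by
  simp only [Upure]
  rw [sum_comm]
  refine (sum_congr rfl fun i _ => sum_comm).trans ?_
  simp only [sum_ite_eq, mem_univ, if_true]
  rw [sum_comm]
  simp only [← mul_sum, sum_expPay_eq hu]
  rw [← sum_mul, ← Fintype.piFinset_univ, sum_piFinset_prod_eq_one _ _ hp, one_mul]

theorem sum_U_eq (hp : ∀ i, ∑ j, p i j = 1) (hu : ∀ a, ∑ i, u i a = c)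
    (Γ : Fin k → FinDist (PureMeta A)) : ∑ j, U u p Γ j = c := by
  simp only [U]
  rw [sum_comm]
  simp only [← mul_sum, sum_Upure_eq hp hu]
  rw [← sum_mul, sum_piFinset_prod_eq_one _ _ fun j => (Γ j).sum_one, one_mul]

end ConstantSum

section TwoLLMs

variable {m : ℕ} {A : Fin m → Type} [∀ i, Fintype (A i)]
  {u : Fin m → (∀ r, A r) → ℝ} {p : Fin m → Fin 2 → ℝ}

theorem U_update_zero_pure (Γ : Fin 2 → FinDist (PureMeta A)) (x : PureMeta A) (j : Fin 2) :
    U u p (Function.update Γ 0 (FinDist.pure x)) j =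
      ∑ y ∈ (Γ 1).support, (Γ 1).w y * Upure u p j ![x, y] := by
  simp only [U, sum_piFinset_fin_two, Fin.prod_univ_two, Function.update_self,
    Function.update_of_ne (show (1 : Fin 2) ≠ 0 by decide)]
  simp [FinDist.pure]

theorem Nash.le_two_mul_U {c : ℝ} {Γ : Fin 2 → FinDist (PureMeta A)} (hΓ : Nash u p Γ)
    (x₁ x₂ : PureMeta A) (hc : ∀ y, c ≤ Upure u p 0 ![x₁, y] + Upure u p 0 ![x₂, y]) :
    c ≤ 2 * U u p Γ 0 := by
  have hdev : ∀ x, ∑ y ∈ (Γ 1).support, (Γ 1).w y * Upure u p 0 ![x, y] ≤ U u p Γ 0 :=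
    fun x => U_update_zero_pure (u := u) (p := p) Γ x 0 ▸ hΓ 0 (FinDist.pure x)
  calc c = ∑ y ∈ (Γ 1).support, (Γ 1).w y * c := by rw [← sum_mul, (Γ 1).sum_one, one_mul]
    _ ≤ ∑ y ∈ (Γ 1).support, (Γ 1).w y * (Upure u p 0 ![x₁, y] + Upure u p 0 ![x₂, y]) :=
      sum_le_sum fun y _ => mul_le_mul_of_nonneg_left (hc y) ((Γ 1).nonneg y)
    _ ≤ 2 * U u p Γ 0 := by
      simp only [mul_add, sum_add_distrib]
      linarith [hdev x₁, hdev x₂]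

end TwoLLMs

theorem sum_mcu (a : Fin 3 → Bool) : ∑ i, mcu i a = 100 := by
  have ha : a = ![a 0, a 1, a 2] := by ext i; fin_cases i <;> rfl
  rw [Fin.sum_univ_three, ha]
  cases a 0 <;> cases a 1 <;> cases a 2 <;> simp +decide [mcu] <;> norm_num

theorem sum_mcp (pp : ℝ) (i : Fin 3) : ∑ j, mcp pp i j = 1 := by
  simp [mcp]

theorem U_mc_zero_add_one (pp : ℝ) (Γ : Fin 2 → FinDist (PureMeta fun _ : Fin 3 => Bool)) :
    U mcu (mcp pp) Γ 0 + U mcu (mcp pp) Γ 1 = 100 := by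
  rw [← Fin.sum_univ_two, sum_U_eq (sum_mcp pp) sum_mcu]

noncomputable def unanimous (b : Bool) : PureMeta fun _ : Fin 3 => Bool :=
  diracProfile fun _ => b

/- Split by the roles the large LLM holds. Summed over `b`, holding all three earns it `200`,
holding two earns `500 / 3`, and holding one earns `100 / 3` plus `200 / 3` times the probability
that the two other roles disagree. -/
theorem Upure_mc_unanimous_add (pp : ℝ) (σ : PureMeta fun _ : Fin 3 => Bool) :
    Upure mcu (mcp pp) 0 ![unanimous false, σ] + Upure mcu (mcp pp) 0 ![unanimous true, σ] =
      200 * pp + 100 * pp * (1 - pp) * (2 * pp - 1) + 400 / 3 * pp * (1 - pp) ^ 2 *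
        ((σ 0).1 true * (1 - (σ 1).1 true) + (σ 1).1 true * (1 - (σ 2).1 true) +
          (σ 2).1 true * (1 - (σ 0).1 true)) := by
  simp only [Upure, expPay, Fin.sum_univ_three, sum_fun_fin_three, Fin.sum_univ_two,
    Fintype.sum_bool, Fin.prod_univ_three, Matrix.cons_val_zero, Matrix.cons_val_one,
    Matrix.cons_val_two, Matrix.head_cons, Matrix.tail_cons, unanimous, diracProfile,
    Mixed.dirac, mcp, Mixed.apply_false]
  simp +decide only [mcu, Fintype.univ_bool, Fin.isValue, ↓reduceIte, sub_self, sub_zero,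
    mul_zero, zero_mul, mul_one, one_mul, add_zero, zero_add]
  ring

theorem Upure_mc_unanimous_add_ge {pp : ℝ} (hpp : 0 ≤ pp) (σ : PureMeta fun _ : Fin 3 => Bool) :
    200 * pp + 100 * pp * (1 - pp) * (2 * pp - 1) ≤
      Upure mcu (mcp pp) 0 ![unanimous false, σ] + Upure mcu (mcp pp) 0 ![unanimous true, σ] := by
  have hq : ∀ r s, 0 ≤ (σ r).1 true * (1 - (σ s).1 true) :=
    fun r s => mul_nonneg ((σ r).2.1 true) (sub_nonneg.2 ((σ s).le_one true))
  rw [Upure_mc_unanimous_add]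
  exact le_add_of_nonneg_right
    (mul_nonneg (by positivity) (add_nonneg (add_nonneg (hq 0 1) (hq 1 2)) (hq 2 0)))

/-- In the majority-coordination meta-game with `p > 1/2`, in every Nash equilibrium the large
LLM obtains a strictly higher average utility than the small LLM. -/
theorem mc_large_llm_better_off
    (pp : ℝ) (hpp : 1 / 2 < pp) (hpp1 : pp < 1)
    (Γ : Fin 2 → FinDist (PureMeta (fun _ : Fin 3 => Bool)))
    (hNash : Nash mcu (mcp pp) Γ) :
    avgU mcu (mcp pp) Γ 1 < avgU mcu (mcp pp) Γ 0 := by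
  have hguarantee := hNash.le_two_mul_U (unanimous false) (unanimous true)
    (Upure_mc_unanimous_add_ge (by linarith))
  have hgain : 0 < pp * (1 - pp) * (2 * pp - 1) :=
    mul_pos (mul_pos (by linarith) (by linarith)) (by linarith)
  have hlarge : 100 * pp < U mcu (mcp pp) Γ 0 := by linarith
  have hsmall : U mcu (mcp pp) Γ 1 < 100 * (1 - pp) := by
    linarith [U_mc_zero_add_one pp Γ]
  have hshare0 : ∑ i, mcp pp i 0 = 3 * pp := by simp [mcp]
  have hshare1 : ∑ i, mcp pp i 1 = 3 * (1 - pp) := by simp [mcp]; ring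
  calc avgU mcu (mcp pp) Γ 1 < 100 / 3 := by
        rw [avgU, hshare1, div_lt_iff₀ (by linarith)]
        linarith
    _ < avgU mcu (mcp pp) Γ 0 := by
        rw [avgU, hshare0, lt_div_iff₀ (by linarith)]
        linarith

end MetaGame
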